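/- Let G = (V,E) be a finite directed graph and for each node i let t_i ≥ 0, and φ_ij ∈ [0,1] for j ∈ O(i) ∪ {0} with ∑_{j∈O(i)∪{0}} φ_ij = 1. Define f_ij = t_i φ_ij for (i,j) ∈ E, g_i = t_i φ_i0, and suppose t_i = r_i + ∑_{j∈I(i)} f_ji with r_i ≥ 0. Let λ_i be reals satisfying, for some δ_ij ≥ λ_i with δ_ij = d_ij + λ_j for j ∈ O(i) and δ_i0 = c_i, the condition λ_i = ∑_{j∈O(i)∪{0}} φ_ij δ_ij. Then ∑_{i∈V}(c_i g_i + ∑_{j∈O(i)} d_ij f_ij) = ∑_{i∈V} λ_i r_i. -/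

import Mathlib

/-!
Multiply the recursion for `λ_i` by the throughput `t_i`: node `i` contributes its own cost plus
`∑_j f_ij λ_j`, the marginal value it passes downstream. Multiplying instead the flow conservation
`t_i = r_i + ∑_j f_ji` by `λ_i` and summing over all nodes, the downstream terms reappear as the
inflow terms, so they cancel and only `∑_i λ_i r_i` remains.
-/

open Finset

section FlowIdentity

variable {V : Type*} [Fintype V] [DecidableEq V] (O : V → Finset V)

theorem sum_sum_filter_mem_eq_sum_sum {M : Type*} [AddCommMonoid M] (F : V → V → M) :
    ∑ i, ∑ j ∈ univ.filter (fun j => i ∈ O j), F j i = ∑ i, ∑ j ∈ O i, F i j :=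
  (sum_comm' fun i j => by simp).symm

theorem sum_cost_eq_sum_mul_input (cost t r lam : V → ℝ) (f : V → V → ℝ)
    (htrec : ∀ i, t i = r i + ∑ j ∈ univ.filter (fun j => i ∈ O j), f j i)
    (hbalance : ∀ i, lam i * t i = cost i + ∑ j ∈ O i, f i j * lam j) :
    ∑ i, cost i = ∑ i, lam i * r i := by
  have hinflow : ∑ i, lam i * t i = ∑ i, lam i * r i + ∑ i, ∑ j ∈ O i, f i j * lam j := by
    simp_rw [htrec, mul_add, mul_sum, sum_add_distrib, mul_comm (lam _)]
    rw [sum_sum_filter_mem_eq_sum_sum O fun j i => f j i * lam i]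
  have houtflow : ∑ i, lam i * t i = ∑ i, cost i + ∑ i, ∑ j ∈ O i, f i j * lam j := by
    rw [← sum_add_distrib]
    exact sum_congr rfl fun i _ => hbalance i
  linarith

end FlowIdentity

theorem marginal_mul_throughput_eq {V : Type*} (O : Finset V) (t φc g cc δ0 lam_i : ℝ)
    (φ f d δ lam : V → ℝ)
    (hf : ∀ j ∈ O, f j = t * φ j) (hg : g = t * φc)
    (hδ : ∀ j ∈ O, δ j = d j + lam j) (hδ0 : δ0 = cc)
    (hlam : lam_i = φc * δ0 + ∑ j ∈ O, φ j * δ j) :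
    lam_i * t = (cc * g + ∑ j ∈ O, d j * f j) + ∑ j ∈ O, f j * lam j := by
  rw [add_assoc, ← sum_add_distrib, hlam, hδ0, hg, add_mul, sum_mul]
  congr 1
  · ring
  · exact sum_congr rfl fun j hj => by rw [hδ j hj, hf j hj]; ring

theorem stmt_9_general {V : Type*} [Fintype V] [DecidableEq V]
    (O : V → Finset V) (t r : V → ℝ) (φ : V → V → ℝ) (φc : V → ℝ)
    (f : V → V → ℝ) (g : V → ℝ) (d : V → V → ℝ) (cc : V → ℝ)
    (δ : V → V → ℝ) (δ0 : V → ℝ) (lam : V → ℝ)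
    (hf : ∀ i j, j ∈ O i → f i j = t i * φ i j)
    (hg : ∀ i, g i = t i * φc i)
    (htrec : ∀ i, t i = r i + ∑ j ∈ Finset.univ.filter (fun j => i ∈ O j), f j i)
    (hδ : ∀ i j, j ∈ O i → δ i j = d i j + lam j)
    (hδ0 : ∀ i, δ0 i = cc i)
    (hlam : ∀ i, lam i = φc i * δ0 i + ∑ j ∈ O i, φ i j * δ i j) :
    ∑ i, (cc i * g i + ∑ j ∈ O i, d i j * f i j) = ∑ i, lam i * r i :=
  sum_cost_eq_sum_mul_input O _ t r lam f htrec fun i =>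
    marginal_mul_throughput_eq (O i) (t i) (φc i) (g i) (cc i) (δ0 i) (lam i) (φ i) (f i) (d i)
      (δ i) lam (hf i) (hg i) (hδ i) (hδ0 i) (hlam i)

theorem stmt_9 {V : Type*} [Fintype V] [DecidableEq V]
    (O : V → Finset V) (t r : V → ℝ) (φ φ0 : V → V → ℝ) (φc : V → ℝ)
    (f : V → V → ℝ) (g : V → ℝ) (d : V → V → ℝ) (cc : V → ℝ)
    (δ : V → V → ℝ) (δ0 : V → ℝ) (lam : V → ℝ)
    (ht : ∀ i, 0 ≤ t i) (hr : ∀ i, 0 ≤ r i)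
    (hφ : ∀ i j, j ∈ O i → φ i j ∈ Set.Icc (0 : ℝ) 1)
    (hφc : ∀ i, φc i ∈ Set.Icc (0 : ℝ) 1)
    (hφsum : ∀ i, φc i + ∑ j ∈ O i, φ i j = 1)
    (hf : ∀ i j, j ∈ O i → f i j = t i * φ i j)
    (hg : ∀ i, g i = t i * φc i)
    (htrec : ∀ i, t i = r i + ∑ j ∈ Finset.univ.filter (fun j => i ∈ O j), f j i)
    (hδge : ∀ i j, j ∈ O i → δ i j ≥ lam i) (hδ0ge : ∀ i, δ0 i ≥ lam i)
    (hδ : ∀ i j, j ∈ O i → δ i j = d i j + lam j)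
    (hδ0 : ∀ i, δ0 i = cc i)
    (hlam : ∀ i, lam i = φc i * δ0 i + ∑ j ∈ O i, φ i j * δ i j) :
    ∑ i, (cc i * g i + ∑ j ∈ O i, d i j * f i j) = ∑ i, lam i * r i :=
  stmt_9_general O t r φ φc f g d cc δ δ0 lam hf hg htrec hδ hδ0 hlam
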